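/- arXiv:1806.10363 — 3 statements merged into one kernel-verified Lean document; each statement's English description precedes it below -/
import Mathlib

section
/- Let A ⊆ ℕ be nonempty and co-infinite. Then Spec⇒(R_A, Id) = {d : deg_T(A) ≤ d}, the cone of Turing degrees above the Turing degree of A. -/
/-- `RecursiveIn' O f` means the partial function `f` is partial recursive in the
(total) oracle `O`. -/
inductive RecursiveIn' (O : ℕ → ℕ) : (ℕ →. ℕ) → Prop
  | zero : RecursiveIn' O (pure 0)
  | succ : RecursiveIn' O Nat.succ
  | left : RecursiveIn' O ↑fun n : ℕ => n.unpair.1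
  | right : RecursiveIn' O ↑fun n : ℕ => n.unpair.2
  | oracle : RecursiveIn' O ↑O
  | pair {f g} : RecursiveIn' O f → RecursiveIn' O g →
      RecursiveIn' O fun n => Nat.pair <$> f n <*> g n
  | comp {f g} : RecursiveIn' O f → RecursiveIn' O g →
      RecursiveIn' O fun n => g n >>= f
  | prec {f g} : RecursiveIn' O f → RecursiveIn' O g →
      RecursiveIn' O (Nat.unpaired fun a n =>
        n.rec (f a) fun y IH => do let i ← IH; g (Nat.pair a (Nat.pair y i)))
  | rfind {f} : RecursiveIn' O f →
      RecursiveIn' O fun a => Nat.rfind fun n => (fun m => m = 0) <$> f (Nat.pair a n)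

/-- Turing reducibility between total functions on `ℕ`. -/
def TuringReducible' (f g : ℕ → ℕ) : Prop := RecursiveIn' g ↑f

/-- Turing equivalence of total functions on `ℕ`. -/
def TuringEquivalent' (f g : ℕ → ℕ) : Prop := TuringReducible' f g ∧ TuringReducible' g f

theorem TuringReducible'.refl (f : ℕ → ℕ) : TuringReducible' f f := RecursiveIn'.oracle

theorem RecursiveIn'.trans' {f : ℕ →. ℕ} {g h : ℕ → ℕ}
    (hf : RecursiveIn' g f) (hg : TuringReducible' g h) : RecursiveIn' h f := by
  induction hf with
  | zero => exact .zero
  | succ => exact .succ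
  | left => exact .left
  | right => exact .right
  | oracle => exact hg
  | pair _ _ ih₁ ih₂ => exact .pair ih₁ ih₂
  | comp _ _ ih₁ ih₂ => exact .comp ih₁ ih₂
  | prec _ _ ih₁ ih₂ => exact .prec ih₁ ih₂
  | rfind _ ih => exact .rfind ih

theorem TuringReducible'.trans {f g h : ℕ → ℕ}
    (h₁ : TuringReducible' f g) (h₂ : TuringReducible' g h) : TuringReducible' f h :=
  RecursiveIn'.trans' h₁ h₂

/-- The setoid of Turing equivalence. -/
def turingSetoid : Setoid (ℕ → ℕ) :=
  ⟨TuringEquivalent',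
    fun f => ⟨.refl f, .refl f⟩,
    fun ⟨h₁, h₂⟩ => ⟨h₂, h₁⟩,
    fun ⟨a₁, a₂⟩ ⟨b₁, b₂⟩ => ⟨a₁.trans b₁, b₂.trans a₂⟩⟩

/-- Turing degrees. -/
def TuringDegree' : Type := Quotient turingSetoid

/-- The Turing degree of a total function. -/
def TuringDegree'.deg (f : ℕ → ℕ) : TuringDegree' := Quotient.mk turingSetoid f

instance : LE TuringDegree' :=
  ⟨fun d₁ d₂ =>
    Quotient.liftOn₂ d₁ d₂ TuringReducible'
      (fun _ _ _ _ h h' =>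
        propext ⟨fun hr => (h.2.trans hr).trans h'.1, fun hr => (h.1.trans hr).trans h'.2⟩)⟩

instance : LT TuringDegree' := ⟨fun d₁ d₂ => d₁ ≤ d₂ ∧ ¬d₂ ≤ d₁⟩

/-- The least Turing degree. -/
def TuringDegree'.zero : TuringDegree' := TuringDegree'.deg fun _ => 0

/-- A partial function is computable in a Turing degree if it is recursive in some
(equivalently, any) representative of that degree. -/
def TuringDegree'.ComputableIn (d : TuringDegree') (f : ℕ →. ℕ) : Prop :=
  Quotient.liftOn d (fun g => RecursiveIn' g f)
    (fun _ _ h => propext ⟨fun hr => hr.trans' h.1, fun hr => hr.trans' h.2⟩)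

open Classical in
/-- The characteristic function of a set of naturals. -/
noncomputable def charFun (A : Set ℕ) : ℕ → ℕ := fun n => if n ∈ A then 1 else 0

/-- Turing reducibility between sets of naturals. -/
noncomputable def SetTuringReducible (A B : Set ℕ) : Prop :=
  TuringReducible' (charFun A) (charFun B)

/-- The Turing degree of a set of naturals. -/
noncomputable def TuringDegree'.degSet (A : Set ℕ) : TuringDegree' :=
  TuringDegree'.deg (charFun A)

/-- `R` is `d`-computably reducible to `S`. -/
def ReducibleIn (d : TuringDegree') (R S : ℕ → ℕ → Prop) : Prop :=
  ∃ f : ℕ → ℕ, d.ComputableIn ↑f ∧ ∀ x y, R x y ↔ S (f x) (f y)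

/-- The reducibility spectrum of the pair `(R, S)`. -/
def SpecRed (R S : ℕ → ℕ → Prop) : Set TuringDegree' := {d | ReducibleIn d R S}

/-- The bi-reducibility spectrum of the pair `(R, S)`. -/
def SpecBired (R S : ℕ → ℕ → Prop) : Set TuringDegree' :=
  {d | ReducibleIn d R S ∧ ReducibleIn d S R}

/-- The equivalence relation generated by a set `A`: two numbers are equivalent
iff they are equal or both belong to `A`. -/
def genRel (A : Set ℕ) : ℕ → ℕ → Prop := fun x y => x = y ∨ (x ∈ A ∧ y ∈ A)

/-- A ceer: an equivalence relation whose set of pairs is computably enumerable. -/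
def Ceer (R : ℕ → ℕ → Prop) : Prop :=
  Equivalence R ∧ REPred fun p : ℕ × ℕ => R p.1 p.2

/-- A computably enumerable set of naturals. -/
def CePred (A : Set ℕ) : Prop := REPred (· ∈ A)

/-- A partial transversal of `R`: a set any two distinct elements of which are
`R`-inequivalent. -/
def PartialTransversal (R : ℕ → ℕ → Prop) (A : Set ℕ) : Prop :=
  ∀ x ∈ A, ∀ y ∈ A, x ≠ y → ¬R x y

/-- An introreducible set: an infinite set computable from each of its infinite subsets. -/
def Introreducible (B : Set ℕ) : Prop :=
  B.Infinite ∧ ∀ C : Set ℕ, C ⊆ B → C.Infinite → SetTuringReducible B C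

/-! A reduction `f` of `R_A` to `Id` computes `A` as the preimage of the point `f a₀` for any
`a₀ ∈ A`; conversely `A` computes the reduction that collapses `A` to `a₀` and fixes the rest. -/

namespace RecursiveIn'

variable {O : ℕ → ℕ}

theorem of_partrec {f : ℕ →. ℕ} (hf : Nat.Partrec f) : RecursiveIn' O f := by
  induction hf with
  | zero => exact .zero
  | succ => exact .succ
  | left => exact .left
  | right => exact .right
  | pair _ _ ih₁ ih₂ => exact .pair ih₁ ih₂
  | comp _ _ ih₁ ih₂ => exact .comp ih₁ ih₂
  | prec _ _ ih₁ ih₂ => exact .prec ih₁ ih₂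
  | rfind _ ih => exact .rfind ih

theorem comp_total {g f : ℕ → ℕ} (hg : RecursiveIn' O ↑g) (hf : RecursiveIn' O ↑f) :
    RecursiveIn' O ↑(g ∘ f) := by
  have hcomp : ((g ∘ f : ℕ → ℕ) : ℕ →. ℕ) = fun n => (f : ℕ →. ℕ) n >>= (g : ℕ →. ℕ) := by
    funext n
    exact (Part.bind_some _ _).symm
  exact hcomp ▸ hg.comp hf

theorem pair_total {f g : ℕ → ℕ} (hf : RecursiveIn' O ↑f) (hg : RecursiveIn' O ↑g) :
    RecursiveIn' O ↑(fun n => Nat.pair (f n) (g n)) := by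
  have hpair : ((fun n => Nat.pair (f n) (g n) : ℕ → ℕ) : ℕ →. ℕ) =
      fun n => Nat.pair <$> (f : ℕ →. ℕ) n <*> (g : ℕ →. ℕ) n := by
    funext n
    simp [PFun.coe_val, Seq.seq]
  exact hpair ▸ hf.pair hg

theorem of_primrec {f : ℕ → ℕ} (hf : Primrec f) : RecursiveIn' O ↑f :=
  of_partrec (Nat.Partrec.of_primrec (Primrec.nat_iff.mp hf))

end RecursiveIn'

theorem charFun_singleton (v : ℕ) : charFun {v} = fun n => if n = v then 1 else 0 := by
  funext n
  simp [charFun]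

theorem genRel_iff_mem {A : Set ℕ} {a₀ : ℕ} (ha₀ : a₀ ∈ A) (x : ℕ) : genRel A x a₀ ↔ x ∈ A := by
  constructor
  · rintro (rfl | ⟨hx, -⟩) <;> assumption
  · exact fun hx => Or.inr ⟨hx, ha₀⟩

theorem charFun_eq_comp_of_reduction {A : Set ℕ} {a₀ : ℕ} (ha₀ : a₀ ∈ A) {f : ℕ → ℕ}
    (hf : ∀ x y, genRel A x y ↔ f x = f y) : charFun A = charFun {f a₀} ∘ f := by
  funext x
  have hmem : x ∈ A ↔ f x ∈ ({f a₀} : Set ℕ) := (genRel_iff_mem ha₀ x).symm.trans (hf x a₀)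
  simp only [charFun, Function.comp_apply]
  congr 1
  exact propext hmem

open Classical in
noncomputable def collapseOnto (A : Set ℕ) (a₀ : ℕ) (x : ℕ) : ℕ :=
  if x ∈ A then a₀ else x

theorem genRel_iff_collapseOnto_eq {A : Set ℕ} {a₀ : ℕ} (ha₀ : a₀ ∈ A) (x y : ℕ) :
    genRel A x y ↔ collapseOnto A a₀ x = collapseOnto A a₀ y := by
  by_cases hx : x ∈ A <;> by_cases hy : y ∈ A <;>
    simp only [genRel, collapseOnto, hx, hy, if_true, if_false] <;>
    grind

theorem collapseOnto_eq_comp (A : Set ℕ) (a₀ : ℕ) :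
    collapseOnto A a₀ = (fun m => if m.unpair.2 = 0 then m.unpair.1 else a₀) ∘
      fun n => Nat.pair n (charFun A n) := by
  funext n
  by_cases hn : n ∈ A <;> simp [collapseOnto, charFun, hn]

theorem recursiveIn_collapseOnto {O : ℕ → ℕ} {A : Set ℕ} (a₀ : ℕ)
    (hA : RecursiveIn' O ↑(charFun A)) :
    RecursiveIn' O ↑(collapseOnto A a₀) := by
  rw [collapseOnto_eq_comp]
  refine RecursiveIn'.comp_total (.of_primrec ?_) (.pair_total (.of_primrec .id) hA)
  exact Primrec.ite (Primrec.eq.comp (Primrec.snd.comp Primrec.unpair) (Primrec.const 0))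
    (Primrec.fst.comp Primrec.unpair) (Primrec.const a₀)

theorem reducibleIn_genRel_eq_iff {A : Set ℕ} {a₀ : ℕ} (ha₀ : a₀ ∈ A) (g : ℕ → ℕ) :
    ReducibleIn (TuringDegree'.deg g) (genRel A) (· = ·) ↔ RecursiveIn' g ↑(charFun A) := by
  constructor
  · rintro ⟨f, hfg, hf⟩
    rw [charFun_eq_comp_of_reduction ha₀ hf, charFun_singleton]
    refine RecursiveIn'.comp_total (.of_primrec ?_) hfg
    exact Primrec.ite (Primrec.eq.comp Primrec.id (Primrec.const _))
      (Primrec.const 1) (Primrec.const 0)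
  · exact fun hA =>
      ⟨collapseOnto A a₀, recursiveIn_collapseOnto a₀ hA, genRel_iff_collapseOnto_eq ha₀⟩

theorem stmt_4_general (A : Set ℕ) (hne : A.Nonempty) :
    SpecRed (genRel A) (fun x y => x = y) = {d | TuringDegree'.degSet A ≤ d} := by
  obtain ⟨a₀, ha₀⟩ := hne
  ext d
  induction d using Quotient.inductionOn with
  | h g => exact reducibleIn_genRel_eq_iff ha₀ g

/-- For nonempty co-infinite `A`, `Spec⇒(R_A, Id)` is the cone of
Turing degrees above the degree of `A`. -/
theorem stmt_4 (A : Set ℕ) (hne : A.Nonempty) (hco : Aᶜ.Infinite) :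
    SpecRed (genRel A) (fun x y => x = y) = {d | TuringDegree'.degSet A ≤ d} :=
  stmt_4_general A hne
end

section
/- For every set A ⊆ ℕ there exists an introreducible set B that is Turing equivalent to A (B ≡_T A); in fact one may take B to be the set of codes of finite initial segments of the characteristic function of A. -/
set_option linter.dupNamespace false

namespace StmtAux

open Encodable Denumerable

theorem recIn_of_eq {O : ℕ → ℕ} {f g : ℕ →. ℕ} (h : RecursiveIn' O f)
    (H : ∀ n, f n = g n) : RecursiveIn' O g := (funext H : f = g) ▸ h

theorem recIn_of_partrec {O : ℕ → ℕ} {f : ℕ →. ℕ} (h : Nat.Partrec f) :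
    RecursiveIn' O f := by
  induction h with
  | zero => exact .zero
  | succ => exact .succ
  | left => exact .left
  | right => exact .right
  | pair _ _ ih₁ ih₂ => exact .pair ih₁ ih₂
  | comp _ _ ih₁ ih₂ => exact .comp ih₁ ih₂
  | prec _ _ ih₁ ih₂ => exact .prec ih₁ ih₂
  | rfind _ ih => exact .rfind ih

theorem recIn_primrec {O : ℕ → ℕ} {f : ℕ → ℕ} (h : Primrec f) : RecursiveIn' O ↑f :=
  recIn_of_partrec (Nat.Partrec.of_primrec (Primrec.nat_iff.1 h))

theorem recIn_totalPair {O f g : ℕ → ℕ} (hf : RecursiveIn' O ↑f) (hg : RecursiveIn' O ↑g) :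
    RecursiveIn' O ↑(fun n => Nat.pair (f n) (g n)) :=
  recIn_of_eq (.pair hf hg) fun n => by simp [Seq.seq]

theorem recIn_totalComp {O f g : ℕ → ℕ} (hf : RecursiveIn' O ↑f) (hg : RecursiveIn' O ↑g) :
    RecursiveIn' O ↑(fun n => f (g n)) :=
  recIn_of_eq (.comp hf hg) fun n => by
    change Part.bind (Part.some (g n)) (f : ℕ →. ℕ) = _
    exact Part.bind_some (g n) (fun a => Part.some (f a))


open Encodable Denumerable

/-- code of the initial segment of `O` of length `k` -/
noncomputable def cov (O : ℕ → ℕ) (k : ℕ) : ℕ := Encodable.encode ((List.range k).map O)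

def lenOf (n : ℕ) : ℕ := (Denumerable.ofNat (List ℕ) n).length

theorem lenOf_cov (O : ℕ → ℕ) (k : ℕ) : lenOf (cov O k) = k := by
  simp [lenOf, cov, ofNat_encode]

theorem primrec_lenOf : Primrec lenOf :=
  Primrec.list_length.comp (Primrec.ofNat (List ℕ))

theorem recIn_cov (O : ℕ → ℕ) : RecursiveIn' O ↑(cov O) := by
  have hstep : Primrec (fun p : ℕ =>
      Encodable.encode ((Denumerable.ofNat (List ℕ) p.unpair.1.unpair.2.unpair.2) ++
        [p.unpair.2])) := by
    have h1 : Primrec (fun p : ℕ => Denumerable.ofNat (List ℕ) p.unpair.1.unpair.2.unpair.2) :=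
      (Primrec.ofNat (List ℕ)).comp <| Primrec.snd.comp <| Primrec.unpair.comp <|
        Primrec.snd.comp <| Primrec.unpair.comp <| Primrec.fst.comp Primrec.unpair
    have h2 : Primrec (fun p : ℕ => [p.unpair.2]) :=
      Primrec.list_cons.comp (Primrec.snd.comp Primrec.unpair) (Primrec.const [])
    exact Primrec.encode.comp (Primrec.list_append.comp h1 h2)
  have hproj : Primrec (fun m : ℕ => m.unpair.2.unpair.1) :=
    Primrec.fst.comp <| Primrec.unpair.comp <| Primrec.snd.comp Primrec.unpair
  have hg : RecursiveIn' O ↑(fun m : ℕ =>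
      Encodable.encode ((Denumerable.ofNat (List ℕ)
        (Nat.pair m (O m.unpair.2.unpair.1)).unpair.1.unpair.2.unpair.2) ++
        [(Nat.pair m (O m.unpair.2.unpair.1)).unpair.2])) :=
    recIn_totalComp (recIn_primrec hstep)
      (recIn_totalPair (recIn_primrec Primrec.id)
        (recIn_totalComp .oracle (recIn_primrec hproj)))
  have H := RecursiveIn'.prec (f := pure 0) (.zero) hg
  have hpz : Primrec (fun n : ℕ => Nat.pair 0 n) :=
    Primrec₂.natPair.comp (Primrec.const 0) Primrec.id
  refine recIn_of_eq (.comp H (recIn_primrec hpz)) fun n => ?_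
  simp only [PFun.coe_val, Part.bind_eq_bind, Part.bind_some, Nat.unpaired, Nat.unpair_pair]
  induction n with
  | zero => simp [cov, Nat.rec_zero]; rfl
  | succ n ih =>
    rw [show (Nat.rec ((pure 0 : ℕ →. ℕ) 0)
        (fun y IH => IH.bind fun i => Part.some (encode (ofNat (List ℕ) i ++ [O y])))
        (n + 1) : Part ℕ) =
      (Nat.rec ((pure 0 : ℕ →. ℕ) 0)
        (fun y IH => IH.bind fun i => Part.some (encode (ofNat (List ℕ) i ++ [O y])))
        n : Part ℕ).bind
        (fun i => Part.some (encode (ofNat (List ℕ) i ++ [O n]))) from rfl, ih]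
    simp [cov, ofNat_encode, List.range_succ]

theorem covFrom_spec : True := trivial

/-- re-encoding the length-`j` initial segment recorded in a code -/
def covFrom (m j : ℕ) : ℕ :=
  Encodable.encode ((List.range j).map fun i => (Denumerable.ofNat (List ℕ) m).getD i 0)

theorem primrec_covFrom : Primrec₂ covFrom :=
  Primrec.encode.comp <| Primrec.list_map (Primrec.list_range.comp Primrec.snd)
    ((Primrec.list_getD 0).comp
      ((Primrec.ofNat (List ℕ)).comp (Primrec.fst.comp Primrec.fst)) Primrec.snd).to₂

theorem covFrom_cov (O : ℕ → ℕ) {j k : ℕ} (h : j ≤ k) : covFrom (cov O k) j = cov O j := by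
  unfold covFrom cov
  rw [ofNat_encode]
  refine congrArg Encodable.encode (List.map_congr_left fun i hi => ?_)
  have hik : i < k := lt_of_lt_of_le (List.mem_range.1 hi) h
  rw [List.getD_eq_getElem _ _ (by simpa using hik), List.getElem_map, List.getElem_range]

theorem recIn_charB (O : ℕ → ℕ) :
    RecursiveIn' O ↑(fun n => if n = cov O (lenOf n) then (1 : ℕ) else 0) := by
  have heq : Primrec (fun p : ℕ => if p.unpair.1 = p.unpair.2 then (1 : ℕ) else 0) :=
    Primrec.ite (Primrec.eq.comp (Primrec.fst.comp Primrec.unpair)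
      (Primrec.snd.comp Primrec.unpair)) (Primrec.const 1) (Primrec.const 0)
  refine recIn_of_eq (recIn_totalComp (recIn_primrec heq)
    (recIn_totalPair (recIn_primrec Primrec.id)
      (recIn_totalComp (recIn_cov O) (recIn_primrec primrec_lenOf)))) fun n => by
    simp only [PFun.coe_val, Nat.unpair_pair, id_eq]

theorem recIn_rfind_post {O : ℕ → ℕ} {t post : ℕ → ℕ} {f : ℕ → ℕ}
    (ht : RecursiveIn' O ↑t) (hpost : Primrec post)
    (H : ∀ n, ∃ k, t (Nat.pair n k) = 0)
    (Hval : ∀ n m, t (Nat.pair n m) = 0 → post (Nat.pair n m) = f n) :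
    RecursiveIn' O ↑f := by
  have hR : RecursiveIn' O fun a =>
      Nat.rfind fun k => (fun m => m = 0) <$> (↑t : ℕ →. ℕ) (Nat.pair a k) := .rfind ht
  have hG := RecursiveIn'.comp (recIn_primrec hpost)
    (RecursiveIn'.pair (recIn_primrec Primrec.id) hR)
  refine recIn_of_eq hG fun n => Part.eq_some_iff.2 ?_
  set p : ℕ →. Bool := fun k => (fun m => m = 0) <$> (↑t : ℕ →. ℕ) (Nat.pair n k) with hp
  obtain ⟨k0, hk0⟩ := H n
  have hdom : (Nat.rfind p).Dom := by
    refine Nat.rfind_dom.2 ⟨k0, ?_, fun {m} _ => ?_⟩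
    · simp [hp, hk0]
    · simp [hp]
  have hmem : (Nat.rfind p).get hdom ∈ Nat.rfind p := Part.get_mem hdom
  set m := (Nat.rfind p).get hdom with hm
  have hspec : true ∈ p m := Nat.rfind_spec hmem
  have ht0 : t (Nat.pair n m) = 0 := by simpa [hp] using hspec
  refine Part.mem_bind_iff.2 ⟨Nat.pair n m, ?_, ?_⟩
  · simp only [Seq.seq, PFun.coe_val, id_eq, Part.map_eq_map, Part.bind_eq_bind,
      Part.mem_bind_iff, Part.mem_map_iff, Part.mem_some_iff]
    exact ⟨Nat.pair n, ⟨n, rfl, rfl⟩, m, hmem, rfl⟩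
  · simp [Hval n m ht0]

theorem recIn_oracle_of_cov {O O' : ℕ → ℕ}
    (hmem : ∀ m, O' m = 1 ↔ ∃ k, m = cov O k) : RecursiveIn' O' ↑O := by
  have hq : Primrec (fun q : ℕ =>
      if q.unpair.2 = 1 ∧ q.unpair.1.unpair.1 < lenOf q.unpair.1.unpair.2
      then (0 : ℕ) else 1) := by
    refine Primrec.ite (PrimrecPred.and ?_ ?_) (Primrec.const 0) (Primrec.const 1)
    · exact Primrec.eq.comp (Primrec.snd.comp Primrec.unpair) (Primrec.const 1)
    · exact Primrec.nat_lt.comp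
        (Primrec.fst.comp (Primrec.unpair.comp (Primrec.fst.comp Primrec.unpair)))
        (primrec_lenOf.comp (Primrec.snd.comp (Primrec.unpair.comp
          (Primrec.fst.comp Primrec.unpair))))
  have ht : RecursiveIn' O' ↑(fun p : ℕ =>
      if O' p.unpair.2 = 1 ∧ p.unpair.1 < lenOf p.unpair.2 then (0 : ℕ) else 1) := by
    refine recIn_of_eq (recIn_totalComp (recIn_primrec hq)
      (recIn_totalPair (recIn_primrec Primrec.id)
        (recIn_totalComp .oracle (recIn_primrec (Primrec.snd.comp Primrec.unpair)))))
      fun p => by simp only [PFun.coe_val, Nat.unpair_pair, id_eq]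
  have hpost : Primrec (fun q : ℕ =>
      (Denumerable.ofNat (List ℕ) q.unpair.2).getD q.unpair.1 0) :=
    (Primrec.list_getD 0).comp
      ((Primrec.ofNat (List ℕ)).comp (Primrec.snd.comp Primrec.unpair))
      (Primrec.fst.comp Primrec.unpair)
  refine recIn_rfind_post ht hpost (fun n => ?_) (fun n m h0 => ?_)
  · refine ⟨cov O (n + 1), ?_⟩
    have h1 : O' (cov O (n + 1)) = 1 := (hmem _).2 ⟨n + 1, rfl⟩
    simp [Nat.unpair_pair, h1, lenOf_cov]
  · by_cases hc : O' m = 1 ∧ n < lenOf m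
    · obtain ⟨k, rfl⟩ := (hmem m).1 hc.1
      have hn : n < k := by simpa [lenOf_cov] using hc.2
      simp only [Nat.unpair_pair, cov, ofNat_encode]
      rw [List.getD_eq_getElem _ _ (by simpa using hn), List.getElem_map, List.getElem_range]
    · rw [Nat.unpair_pair] at h0 ⊢
      simp [hc] at h0

theorem recIn_charB_of_subset {O O'' : ℕ → ℕ}
    (hsub : ∀ m, O'' m = 1 → ∃ k, m = cov O k)
    (hub : ∀ b, ∃ m, O'' m = 1 ∧ b ≤ lenOf m) :
    RecursiveIn' O'' ↑(fun n => if n = cov O (lenOf n) then (1 : ℕ) else 0) := by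
  have hq : Primrec (fun q : ℕ =>
      if q.unpair.2 = 1 ∧ lenOf q.unpair.1.unpair.1 ≤ lenOf q.unpair.1.unpair.2
      then (0 : ℕ) else 1) := by
    refine Primrec.ite (PrimrecPred.and ?_ ?_) (Primrec.const 0) (Primrec.const 1)
    · exact Primrec.eq.comp (Primrec.snd.comp Primrec.unpair) (Primrec.const 1)
    · exact Primrec.nat_le.comp
        (primrec_lenOf.comp (Primrec.fst.comp (Primrec.unpair.comp
          (Primrec.fst.comp Primrec.unpair))))
        (primrec_lenOf.comp (Primrec.snd.comp (Primrec.unpair.comp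
          (Primrec.fst.comp Primrec.unpair))))
  have ht : RecursiveIn' O'' ↑(fun p : ℕ =>
      if O'' p.unpair.2 = 1 ∧ lenOf p.unpair.1 ≤ lenOf p.unpair.2 then (0 : ℕ) else 1) := by
    refine recIn_of_eq (recIn_totalComp (recIn_primrec hq)
      (recIn_totalPair (recIn_primrec Primrec.id)
        (recIn_totalComp .oracle (recIn_primrec (Primrec.snd.comp Primrec.unpair)))))
      fun p => by simp only [PFun.coe_val, Nat.unpair_pair, id_eq]
  have hpost : Primrec (fun q : ℕ =>
      if q.unpair.1 = covFrom q.unpair.2 (lenOf q.unpair.1) then (1 : ℕ) else 0) := by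
    refine Primrec.ite (Primrec.eq.comp (Primrec.fst.comp Primrec.unpair)
      (primrec_covFrom.comp (Primrec.snd.comp Primrec.unpair)
        (primrec_lenOf.comp (Primrec.fst.comp Primrec.unpair))))
      (Primrec.const 1) (Primrec.const 0)
  refine recIn_rfind_post ht hpost (fun n => ?_) (fun n m h0 => ?_)
  · obtain ⟨m, hm1, hm2⟩ := hub (lenOf n)
    exact ⟨m, by simp [Nat.unpair_pair, hm1, hm2]⟩
  · by_cases hc : O'' m = 1 ∧ lenOf n ≤ lenOf m
    · obtain ⟨k, rfl⟩ := hsub m hc.1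
      have hn : lenOf n ≤ k := by simpa [lenOf_cov] using hc.2
      rw [Nat.unpair_pair]
      simp only [covFrom_cov O hn]
    · rw [Nat.unpair_pair] at h0
      simp [hc] at h0



theorem charFun_eq_one {S : Set ℕ} {m : ℕ} : charFun S m = 1 ↔ m ∈ S := by
  by_cases h : m ∈ S <;> simp [charFun, h]

theorem main (A : Set ℕ) :
    letI O := charFun A
    letI B : Set ℕ := {n | ∃ k, n = cov O k}
    (B.Infinite ∧ ∀ C : Set ℕ, C ⊆ B → C.Infinite →
      RecursiveIn' (charFun C) ↑(charFun B)) ∧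
    RecursiveIn' (charFun A) ↑(charFun B) ∧ RecursiveIn' (charFun B) ↑(charFun A) := by
  set O := charFun A with hO
  set B : Set ℕ := {n | ∃ k, n = cov O k} with hB
  have hinj : Function.Injective (cov O) := fun a b h => by
    have := congrArg lenOf h; rwa [lenOf_cov, lenOf_cov] at this
  have hBiff : ∀ n, n ∈ B ↔ n = cov O (lenOf n) := by
    intro n
    constructor
    · rintro ⟨k, rfl⟩; rw [lenOf_cov]
    · intro h; exact ⟨lenOf n, h⟩
  have hcharB : charFun B = fun n => if n = cov O (lenOf n) then (1 : ℕ) else 0 := by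
    funext n
    by_cases h : n ∈ B
    · rw [charFun_eq_one.2 h, if_pos ((hBiff n).1 h)]
    · rw [show charFun B n = 0 by simp [charFun, h],
        if_neg (fun hn => h ((hBiff n).2 hn))]
  refine ⟨⟨?_, ?_⟩, ?_, ?_⟩
  · exact Set.infinite_of_injective_forall_mem hinj fun k => ⟨k, rfl⟩
  · intro C hCB hC
    rw [hcharB]
    have hlenInj : Set.InjOn lenOf C := by
      intro x hx y hy hxy
      obtain ⟨k1, rfl⟩ := hCB hx
      obtain ⟨k2, rfl⟩ := hCB hy
      rw [lenOf_cov, lenOf_cov] at hxy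
      rw [hxy]
    refine recIn_charB_of_subset (fun m hm => hCB (charFun_eq_one.1 hm)) (fun b => ?_)
    have himg : (lenOf '' C).Infinite := (Set.infinite_image_iff hlenInj).2 hC
    obtain ⟨c, ⟨m, hmC, rfl⟩, hbc⟩ := himg.exists_gt b
    exact ⟨m, charFun_eq_one.2 hmC, le_of_lt hbc⟩
  · rw [hcharB]; exact recIn_charB O
  · exact recIn_oracle_of_cov fun m => charFun_eq_one.trans (by rfl)

end StmtAux


/-- Every set is Turing equivalent to an introreducible set, namely
the set of codes of finite initial segments of its characteristic function. -/
theorem stmt_8 (A : Set ℕ) :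
    ∃ B : Set ℕ, Introreducible B ∧ TuringEquivalent' (charFun B) (charFun A) ∧
      B = {n | ∃ k, n = Encodable.encode ((List.range k).map (charFun A))} := by
  obtain ⟨⟨h1, h2⟩, h3, h4⟩ := StmtAux.main A
  exact ⟨_, ⟨h1, h2⟩, ⟨h3, h4⟩, rfl⟩
end

section
/- Let R be a ceer with infinitely many equivalence classes such that for some n ∈ ℕ every equivalence class of R has at most n elements (R is bounded). Then there is a computable function f : ℕ → ℕ with x = y ↔ f(x) R f(y) for all x, y; equivalently, R has an infinite computably enumerable partial transversal, and the degree 0 belongs to Spec⇒(Id, R). -/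
/-!
Let `m` be the largest size shared by infinitely many classes (classes are bounded, so it
exists); past some `N` every class has at most `m` elements. Hence once stage `t` of the
enumeration of `R` shows `m` elements related to some `x ≥ N`, the class of `x` is complete,
and it can be checked whether `x` is its minimum. These certified minima form an infinite c.e.
set of pairwise inequivalent numbers, and any computable strictly increasing selection from it
is a reduction of `Id` to `R`.
-/

open Nat.Partrec (Code)

theorem REPred.exists_primrec_stages {α : Type*} [Primcodable α] {p : α → Prop}
    (hp : REPred p) :
    ∃ s : ℕ → α → Bool, Primrec₂ s ∧ (∀ {t t' a}, t ≤ t' → s t a → s t' a) ∧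
      ∀ a, p a ↔ ∃ t, s t a := by
  obtain ⟨c, hc⟩ := Code.exists_code.1 hp
  refine ⟨fun t a => (Code.evaln t c (Encodable.encode a)).isSome, ?_, ?_, fun a => ?_⟩
  · exact Primrec.option_isSome.comp (Code.primrec_evaln.comp
      ((Primrec.fst.pair (Primrec.const c)).pair (Primrec.encode.comp Primrec.snd)))
  · intro t t' a htt' h
    obtain ⟨x, hx⟩ := Option.isSome_iff_exists.1 h
    exact Option.isSome_iff_exists.2 ⟨x, Code.evaln_mono htt' hx⟩
  · have hdom : p a ↔ (Code.eval c (Encodable.encode a)).Dom := by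
      simp [hc, Part.assert]
    simp only [hdom, Part.dom_iff_mem, Code.evaln_complete, Option.isSome_iff_exists]
    exact ⟨fun ⟨x, t, h⟩ => ⟨t, x, h⟩, fun ⟨t, x, h⟩ => ⟨x, t, h⟩⟩

theorem REPred.exists_nat {α : Type*} [Primcodable α] {q : α → ℕ → Prop}
    (hq : ComputablePred fun p : α × ℕ => q p.1 p.2) : REPred fun a => ∃ t, q a t := by
  classical
  refine (Partrec.rfind hq.decide.to₂.partrec₂).dom_re.of_eq fun a => ?_
  simp [Nat.rfind_dom]

theorem Computable.cePred_range {f : ℕ → ℕ} (hf : Computable f) : CePred (Set.range f) :=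
  (REPred.exists_nat (q := fun x k => f k = x) (Computable.computablePred
    (Primrec.eq.decide.to_comp.comp (hf.comp Computable.snd) Computable.fst))).of_eq
    fun _ => Set.mem_range.symm

theorem Nat.Partrec.recursiveIn' {f : ℕ →. ℕ} (hf : Nat.Partrec f) (O : ℕ → ℕ) :
    RecursiveIn' O f := by
  induction hf with
  | zero => exact .zero
  | succ => exact .succ
  | left => exact .left
  | right => exact .right
  | pair _ _ ih₁ ih₂ => exact .pair ih₁ ih₂
  | comp _ _ ih₁ ih₂ => exact .comp ih₁ ih₂
  | prec _ _ ih₁ ih₂ => exact .prec ih₁ ih₂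
  | rfind _ ih => exact .rfind ih

theorem exists_computable_strictMono_of_infinite {q : ℕ → ℕ → Prop} (hq : PrimrecRel q)
    (hinf : {x | ∃ t, q t x}.Infinite) :
    ∃ f : ℕ → ℕ, Computable f ∧ StrictMono f ∧ ∀ k, ∃ t, q t (f k) := by
  classical
  have hnext : ∀ a, ∃ u : ℕ, a < u.unpair.2 ∧ q u.unpair.1 u.unpair.2 := fun a => by
    obtain ⟨x, ⟨t, ht⟩, hax⟩ := hinf.exists_gt a
    exact ⟨Nat.pair t x, by simpa using ⟨hax, ht⟩⟩
  let next : ℕ → ℕ := fun a => (Nat.find (hnext a)).unpair.2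
  have hnext_computable : Computable next := by
    refine (Primrec.snd.comp Primrec.unpair).to_comp.comp (Computable.find ?_ hnext)
    refine PrimrecPred.computablePred (PrimrecPred.and ?_ ?_)
    · exact Primrec.nat_lt.comp Primrec.fst (Primrec.snd.comp (Primrec.unpair.comp Primrec.snd))
    · exact hq.comp (Primrec.fst.comp (Primrec.unpair.comp Primrec.snd))
        (Primrec.snd.comp (Primrec.unpair.comp Primrec.snd))
  refine ⟨fun k => Nat.rec (next 0) (fun _ y => next y) k, ?_,
    strictMono_nat_of_lt_succ fun k => (Nat.find_spec (hnext _)).1, fun k => ?_⟩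
  · exact Computable.nat_rec Computable.id (Computable.const _)
      (hnext_computable.comp (Computable.snd.comp Computable.snd)).to₂
  · cases k <;> exact ⟨_, (Nat.find_spec (hnext _)).2⟩

theorem Nat.exists_infinite_fiber_eventually_le {g : ℕ → ℕ} {n : ℕ} (hg : ∀ x, g x ≤ n) :
    ∃ m N, (∀ x, N ≤ x → g x ≤ m) ∧ {x | g x = m}.Infinite := by
  classical
  set m := Nat.findGreatest (fun k => {x | k ≤ g x}.Infinite) n
  have hm : {x | m ≤ g x}.Infinite :=
    Nat.findGreatest_spec (P := fun k => {x | k ≤ g x}.Infinite) (Nat.zero_le n)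
      (by simpa using Set.infinite_univ)
  have hm_succ : {x | m + 1 ≤ g x}.Finite := by
    by_cases h : m + 1 ≤ n
    · exact Set.not_infinite.1 (Nat.findGreatest_is_greatest (Nat.lt_succ_self m) h)
    · refine Set.finite_empty.subset fun x (hx : m + 1 ≤ g x) => ?_
      have := hg x
      omega
  obtain ⟨N, hN⟩ := hm_succ.bddAbove
  refine ⟨m, N + 1, fun x hx => ?_, (hm.sdiff hm_succ).mono fun x hx => ?_⟩
  · by_contra! hlt
    have := hN (show m + 1 ≤ g x from hlt)
    omega
  · simp only [Set.mem_sdiff, Set.mem_ofPred_eq] at hx ⊢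
    omega

section ClassMinima

variable {R : ℕ → ℕ → Prop}

theorem exists_rel_forall_rel_le (hR : Equivalence R) (x : ℕ) :
    ∃ z, R x z ∧ ∀ y, R z y → z ≤ y := by
  classical
  have hx : ∃ z, R x z := ⟨x, hR.refl x⟩
  exact ⟨Nat.find hx, Nat.find_spec hx,
    fun y hy => Nat.find_min' hx (hR.trans (Nat.find_spec hx) hy)⟩

theorem infinite_setOf_classMinimum (hR : Equivalence R) (hfin : ∀ x, {y | R x y}.Finite)
    {m : ℕ} (hm : {x | {y | R x y}.ncard = m}.Infinite) :
    {x | {y | R x y}.ncard = m ∧ ∀ y, R x y → x ≤ y}.Infinite := by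
  intro hmin
  refine hm ((hmin.biUnion fun z _ => hfin z).subset fun x (hx : _ = m) => ?_)
  obtain ⟨z, hxz, hz⟩ := exists_rel_forall_rel_le hR x
  have hcls : {y | R z y} = {y | R x y} :=
    Set.ext fun y => ⟨hR.trans hxz, hR.trans (hR.symm hxz)⟩
  exact Set.mem_biUnion (x := z) ⟨hcls ▸ hx, hz⟩ (hR.symm hxz)

end ClassMinima

section Stages

variable {R : ℕ → ℕ → Prop} {s : ℕ → ℕ × ℕ → Bool} {N m t x : ℕ}

def stageClass (s : ℕ → ℕ × ℕ → Bool) (t x : ℕ) : List ℕ :=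
  (List.range t).filter fun y => s t (x, y)

theorem mem_stageClass {y : ℕ} : y ∈ stageClass s t x ↔ y < t ∧ s t (x, y) := by
  simp [stageClass]

theorem ncard_setOf_mem_stageClass :
    {y | y ∈ stageClass s t x}.ncard = (stageClass s t x).length := by
  unfold stageClass
  rw [← List.coe_toFinset, Set.ncard_coe_finset,
    List.toFinset_card_of_nodup (List.nodup_range.filter _)]

def CertifiedMinimum (s : ℕ → ℕ × ℕ → Bool) (N m t x : ℕ) : Prop :=
  N ≤ x ∧ (stageClass s t x).length = m ∧ ∀ y < x, s t (x, y) = false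

theorem primrecRel_certifiedMinimum (hs : Primrec₂ s) (N m : ℕ) :
    PrimrecRel (CertifiedMinimum s N m) := by
  have hrel : ∀ b : Bool, PrimrecRel fun (y : ℕ) (p : ℕ × ℕ) => s p.1 (p.2, y) = b := fun b =>
    Primrec.eq.comp (hs.comp (Primrec.fst.comp Primrec.snd)
      ((Primrec.snd.comp Primrec.snd).pair Primrec.fst)) (Primrec.const b)
  have hclass : Primrec fun p : ℕ × ℕ => stageClass s p.1 p.2 :=
    ((hrel true).listFilter.comp (Primrec.list_range.comp Primrec.fst) Primrec.id).of_eq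
      fun p => by simp [stageClass]
  refine (Primrec.nat_le.comp (Primrec.const N) Primrec.snd).and
    ((Primrec.eq.comp (Primrec.list_length.comp hclass) (Primrec.const m)).and ?_)
  exact ((hrel false).forall_mem_list.comp (Primrec.list_range.comp Primrec.snd) Primrec.id).of_eq
    fun p => by simp

theorem CertifiedMinimum.le_of_rel (hs : ∀ p : ℕ × ℕ, R p.1 p.2 ↔ ∃ t, s t p)
    (hfin : ∀ x, {y | R x y}.Finite) (hN : ∀ x, N ≤ x → {y | R x y}.ncard ≤ m)
    (h : CertifiedMinimum s N m t x) {y : ℕ} (hxy : R x y) : x ≤ y := by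
  obtain ⟨hNx, hlen, hmin⟩ := h
  have hsub : {y | y ∈ stageClass s t x} ⊆ {y | R x y} :=
    fun y hy => (hs (x, y)).2 ⟨t, (mem_stageClass.1 hy).2⟩
  have hcls : {y | y ∈ stageClass s t x} = {y | R x y} :=
    Set.eq_of_subset_of_ncard_le hsub (by rw [ncard_setOf_mem_stageClass, hlen]; exact hN x hNx)
      (hfin x)
  by_contra! hyx
  have hy : y ∈ stageClass s t x := (Set.ext_iff.1 hcls y).2 hxy
  simp [hmin y hyx, mem_stageClass] at hy

theorem exists_certifiedMinimum (hs : ∀ p : ℕ × ℕ, R p.1 p.2 ↔ ∃ t, s t p)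
    (hmono : ∀ {t t' p}, t ≤ t' → s t p → s t' p) (hfin : ∀ x, {y | R x y}.Finite)
    (hNx : N ≤ x) (hm : {y | R x y}.ncard = m) (hmin : ∀ y, R x y → x ≤ y) :
    ∃ t, CertifiedMinimum s N m t x := by
  have hstage : ∀ᶠ t in Filter.atTop, ∀ y ∈ {y | R x y}, y < t ∧ s t (x, y) := by
    refine (Filter.eventually_all_finite (hfin x)).2 fun y hy => ?_
    obtain ⟨t₀, ht₀⟩ := (hs (x, y)).1 hy
    exact (Filter.eventually_gt_atTop y).and
      (Filter.eventually_atTop.2 ⟨t₀, fun t ht => hmono ht ht₀⟩)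
  obtain ⟨t, ht⟩ := hstage.exists
  have hcls : {y | y ∈ stageClass s t x} = {y | R x y} := Set.ext fun y =>
    ⟨fun hy => (hs (x, y)).2 ⟨t, (mem_stageClass.1 hy).2⟩, fun hy => mem_stageClass.2 (ht y hy)⟩
  refine ⟨t, hNx, by rw [← ncard_setOf_mem_stageClass, hcls, hm], fun y hyx => ?_⟩
  by_contra hy
  exact absurd (hmin y ((hs (x, y)).2 ⟨t, by simpa using hy⟩)) (not_le.2 hyx)

end Stages

theorem Ceer.exists_computable_id_reduction_of_bounded {R : ℕ → ℕ → Prop} (hR : Ceer R)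
    {n : ℕ} (hbnd : ∀ x, {y | R x y}.Finite ∧ {y | R x y}.ncard ≤ n) :
    ∃ f : ℕ → ℕ, Computable f ∧ ∀ x y, x = y ↔ R (f x) (f y) := by
  obtain ⟨s, hs_primrec, hmono, hs⟩ := hR.2.exists_primrec_stages
  have hfin : ∀ x, {y | R x y}.Finite := fun x => (hbnd x).1
  obtain ⟨m, N, hN, hm⟩ := Nat.exists_infinite_fiber_eventually_le fun x => (hbnd x).2
  have hcert : {x | ∃ t, CertifiedMinimum s N m t x}.Infinite := by
    refine ((infinite_setOf_classMinimum hR.1 hfin hm).sdiff (Set.finite_lt_nat N)).mono ?_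
    rintro x ⟨⟨hxm, hmin⟩, hNx⟩
    exact exists_certifiedMinimum hs hmono hfin (not_lt.1 hNx) hxm hmin
  obtain ⟨f, hf, hf_mono, hf_cert⟩ :=
    exists_computable_strictMono_of_infinite (primrecRel_certifiedMinimum hs_primrec N m) hcert
  refine ⟨f, hf, fun a b => ⟨fun hab => hab ▸ hR.1.refl _, fun hab => hf_mono.injective ?_⟩⟩
  obtain ⟨t, ht⟩ := hf_cert a
  obtain ⟨t', ht'⟩ := hf_cert b
  exact le_antisymm (ht.le_of_rel hs hfin hN hab) (ht'.le_of_rel hs hfin hN (hR.1.symm hab))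

theorem stmt_15_general (R : ℕ → ℕ → Prop) (hR : Ceer R)
    (n : ℕ) (hbnd : ∀ x, {y | R x y}.Finite ∧ {y | R x y}.ncard ≤ n) :
    (∃ f : ℕ → ℕ, Computable f ∧ ∀ x y, x = y ↔ R (f x) (f y)) ∧
      (∃ A : Set ℕ, A.Infinite ∧ PartialTransversal R A ∧ CePred A) ∧
      TuringDegree'.zero ∈ SpecRed (fun x y => x = y) R := by
  obtain ⟨f, hf, hf_red⟩ := hR.exists_computable_id_reduction_of_bounded hbnd
  have hf_inj : Function.Injective f := fun a b hab => (hf_red a b).2 (hab ▸ hR.1.refl _)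
  refine ⟨⟨f, hf, hf_red⟩, ⟨Set.range f, Set.infinite_range_of_injective hf_inj, ?_,
    hf.cePred_range⟩, f, (Partrec.nat_iff.1 hf).recursiveIn' _, hf_red⟩
  rintro _ ⟨a, rfl⟩ _ ⟨b, rfl⟩ hne hab
  exact hne (congrArg f ((hf_red a b).2 hab))

/-- A bounded ceer with infinitely many classes admits a computable
reduction from `Id`; equivalently it has an infinite c.e. partial transversal,
and `0 ∈ Spec⇒(Id, R)`. -/
theorem stmt_15 (R : ℕ → ℕ → Prop) (hR : Ceer R) (hinf : Infinite (Quot R))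
    (n : ℕ) (hbnd : ∀ x, {y | R x y}.Finite ∧ {y | R x y}.ncard ≤ n) :
    (∃ f : ℕ → ℕ, Computable f ∧ ∀ x y, x = y ↔ R (f x) (f y)) ∧
      (∃ A : Set ℕ, A.Infinite ∧ PartialTransversal R A ∧ CePred A) ∧
      TuringDegree'.zero ∈ SpecRed (fun x y => x = y) R :=
  stmt_15_general R hR n hbnd
end
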